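/- Let S = σ^∨ ∩ ℤ^d be the lattice points of a full-dimensional rational cone σ^∨ ⊆ ℝ^d containing no line, let I = (x^{u_1},...,x^{u_n}) be a monomial ideal of k[[S]], and write Hull I for the convex hull of Exp I = {v ∈ S : x^v ∈ I}. Then for all integers m ≥ 1: ((m+n)·Hull I) ∩ ℤ^d ⊆ Exp(I^m) ⊆ (m·Hull I) ∩ ℤ^d, and for all e ≥ 0, Exp(I^{[p^e]}) = (p^e·Exp I + σ^∨) ∩ ℤ^d. -/

import Mathlib

open Set Pointwise

/-! We formalize the combinatorics of monomial ideals in a toric ring `k[[S]]`,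
`S = σ^∨ ∩ ℤ^d`: monomials are identified with their exponent vectors, so for
`I = (x^{u_1}, ..., x^{u_n})` we have
`Exp (I^m) = {v ∈ ℤ^d : ∃ a ∈ ℕ^n, ∑ a_i = m, v ∈ ∑ a_i u_i + σ^∨}` and
`Exp (I^{[p^e]}) = {v ∈ ℤ^d : ∃ i, v ∈ p^e u_i + σ^∨}`. -/

variable (d : ℕ)

/-- The lattice `ℤ^d ⊆ ℝ^d`. -/
def latticePts : Set (Fin d → ℝ) := {v | ∀ j, ∃ z : ℤ, v j = (z : ℝ)}

/-! Every point of `Exp I` lies in some `u_i + σ`, so `Hull I ⊆ conv(u_1, …, u_n) + σ`: a point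
of `(m + n) • Hull I` is `∑ b_i u_i + c` with `b_i ≥ 0`, `∑ b_i = m + n` and `c ∈ σ`. Rounding
the `b_i` down loses less than `n`, so some `a ≤ ⌊b⌋` with `∑ a_i = m` puts such a point, if it
is a lattice point, in `Exp (I^m)`. Conversely, if `v = ∑ a_i u_i + s` with `∑ a_i = m ≥ 1` and
`s ∈ σ ∩ ℤ^d`, then `v = (m - 1) • y + (y + s)` for the barycentre `y` of the `a_i u_i`, and
`Hull I` is stable under translation by `σ ∩ ℤ^d`. -/

def latticeAddSubgroup : AddSubgroup (Fin d → ℝ) where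
  carrier := latticePts d
  add_mem' {x y} hx hy j := by
    obtain ⟨a, ha⟩ := hx j
    obtain ⟨b, hb⟩ := hy j
    exact ⟨a + b, by simp [ha, hb]⟩
  zero_mem' _ := ⟨0, by simp⟩
  neg_mem' {x} hx j := by
    obtain ⟨a, ha⟩ := hx j
    exact ⟨-a, by simp [ha]⟩

lemma exists_nat_le_sum_eq {ι : Type*} [Fintype ι] {b : ι → ℝ} (hb : ∀ i, 0 ≤ b i) {m : ℕ}
    (hm : (m + Fintype.card ι : ℝ) ≤ ∑ i, b i) :
    ∃ a : ι → ℕ, (∀ i, (a i : ℝ) ≤ b i) ∧ ∑ i, a i = m := by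
  have hfloor : m ≤ ∑ i, ⌊b i⌋₊ := by
    have : (m : ℝ) + Fintype.card ι ≤ ∑ i, (⌊b i⌋₊ : ℝ) + Fintype.card ι := calc
      _ ≤ ∑ i, b i := hm
      _ ≤ ∑ i, ((⌊b i⌋₊ : ℝ) + 1) :=
        Finset.sum_le_sum fun i _ => (Nat.lt_floor_add_one _).le
      _ = _ := by simp [Finset.sum_add_distrib]
    exact_mod_cast le_of_add_le_add_right this
  obtain ⟨a, hab, ham⟩ := Finsupp.exists_le_degree_eq
    (Finsupp.equivFunOnFinite.symm fun i => ⌊b i⌋₊) m (by rwa [Finsupp.degree_eq_sum])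
  refine ⟨a, fun i => ?_, by rwa [Finsupp.degree_eq_sum] at ham⟩
  calc (a i : ℝ) ≤ ⌊b i⌋₊ := by exact_mod_cast hab i
    _ ≤ b i := Nat.floor_le (hb i)

section

variable {E : Type*} [AddCommGroup E] [Module ℝ E]

lemma exists_mem_stdSimplex_of_mem_convexHull_range {ι : Type*} [Fintype ι] {v : ι → E}
    {x : E} (hx : x ∈ convexHull ℝ (range v)) : ∃ c ∈ stdSimplex ℝ ι, ∑ i, c i • v i = x := by
  classical
  refine convexHull_min ?_ ((convex_stdSimplex ℝ ι).linear_image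
    (Fintype.linearCombination ℝ v)) hx
  rintro _ ⟨i, rfl⟩
  exact ⟨Pi.single i 1, single_mem_stdSimplex ℝ i, by simp [Fintype.linearCombination_apply]⟩

lemma PointedCone.coe_hull_range {ι : Type*} [Fintype ι] (w : ι → E) :
    (PointedCone.hull ℝ (range w) : Set E) =
      {x | ∃ c : ι → ℝ, (∀ i, 0 ≤ c i) ∧ x = ∑ i, c i • w i} := by
  ext x
  simp only [SetLike.mem_coe, Submodule.mem_span_range_iff_exists_fun, mem_ofPred_eq]
  constructor
  · rintro ⟨c, rfl⟩
    exact ⟨fun i => c i, fun i => (c i).2, rfl⟩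
  · rintro ⟨c, hc, rfl⟩
    exact ⟨fun i => ⟨c i, hc i⟩, rfl⟩

variable (C : PointedCone ℝ E) (L : AddSubgroup E) {n : ℕ} (u : Fin n → E)

/-- `Exp I` for `I = (x^{u_1}, …, x^{u_n})` in `k[[C ∩ L]]`. -/
def expIdeal : Set E := {v | v ∈ L ∧ ∃ i, v - u i ∈ C}

def expIdealPow (m : ℕ) : Set E :=
  {v | v ∈ L ∧ ∃ a : Fin n → ℕ, ∑ i, a i = m ∧ v - ∑ i, (a i : ℝ) • u i ∈ C}

variable {C L u}

lemma generator_mem_expIdeal {i : Fin n} (hi : u i ∈ L) : u i ∈ expIdeal C L u :=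
  ⟨hi, i, by simp⟩

lemma add_mem_expIdeal {x s : E} (hx : x ∈ expIdeal C L u) (hsC : s ∈ C) (hsL : s ∈ L) :
    x + s ∈ expIdeal C L u := by
  obtain ⟨hxL, i, hi⟩ := hx
  refine ⟨L.add_mem hxL hsL, i, ?_⟩
  rw [add_sub_right_comm]
  exact C.add_mem hi hsC

lemma add_mem_convexHull_expIdeal {x s : E} (hx : x ∈ convexHull ℝ (expIdeal C L u))
    (hsC : s ∈ C) (hsL : s ∈ L) : x + s ∈ convexHull ℝ (expIdeal C L u) := by
  have : x + s ∈ convexHull ℝ (expIdeal C L u + {s}) := by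
    rw [convexHull_add, convexHull_singleton]
    exact add_mem_add hx rfl
  refine convexHull_mono ?_ this
  rintro _ ⟨y, hy, _, rfl, rfl⟩
  exact add_mem_expIdeal hy hsC hsL

lemma convexHull_expIdeal_subset_convexHull_range_add :
    convexHull ℝ (expIdeal C L u) ⊆ convexHull ℝ (range u) + C :=
  convexHull_min (fun x ⟨_, i, hi⟩ => ⟨u i, subset_convexHull ℝ _ (mem_range_self i),
    x - u i, hi, add_sub_cancel _ _⟩) ((convex_convexHull ℝ _).add C.convex)

theorem smul_convexHull_expIdeal_inter_subset_expIdealPow (hu : ∀ i, u i ∈ C) (m : ℕ) :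
    ((m + n : ℕ) : ℝ) • convexHull ℝ (expIdeal C L u) ∩ L ⊆ expIdealPow C L u m := by
  rintro _ ⟨⟨x, hx, rfl⟩, hvL⟩
  obtain ⟨y, hy, c, hc, rfl⟩ := convexHull_expIdeal_subset_convexHull_range_add hx
  obtain ⟨l, ⟨hl0, hl1⟩, rfl⟩ := exists_mem_stdSimplex_of_mem_convexHull_range hy
  set M : ℝ := ((m + n : ℕ) : ℝ)
  obtain ⟨a, hab, ha⟩ := exists_nat_le_sum_eq (m := m) (b := fun i => M * l i)
    (fun i => mul_nonneg (by positivity) (hl0 i)) (by simp [M, ← Finset.mul_sum, hl1])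
  refine ⟨hvL, a, ha, ?_⟩
  have : M • (∑ i, l i • u i + c) - ∑ i, (a i : ℝ) • u i =
      ∑ i, (M * l i - a i) • u i + M • c := by
    simp only [smul_add, Finset.smul_sum, smul_smul, sub_smul, Finset.sum_sub_distrib]
    abel
  rw [this]
  exact C.add_mem (C.sum_mem fun i _ => C.smul_mem (sub_nonneg.2 (hab i)) (hu i))
    (C.smul_mem (by positivity) hc)

theorem expIdealPow_subset_smul_convexHull_expIdeal_inter (hu : ∀ i, u i ∈ L) {m : ℕ}
    (hm : 1 ≤ m) : expIdealPow C L u m ⊆ (m : ℝ) • convexHull ℝ (expIdeal C L u) ∩ L := by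
  rintro v ⟨hvL, a, ha, hs⟩
  refine ⟨?_, hvL⟩
  set y := Finset.univ.centerMass (fun i => (a i : ℝ)) u
  have hmR : ∑ i, (a i : ℝ) = m := by exact_mod_cast ha
  have hy : y ∈ convexHull ℝ (expIdeal C L u) :=
    convexHull_mono (range_subset_iff.2 fun i => generator_mem_expIdeal (hu i))
      (Finset.univ.centerMass_mem_convexHull (fun i _ => by positivity)
        (by rw [hmR]; positivity) fun i _ => mem_range_self i)
  have hmy : (m : ℝ) • y = ∑ i, (a i : ℝ) • u i := by
    simp [y, Finset.centerMass, hmR, smul_inv_smul₀, (by positivity : (m : ℝ) ≠ 0)]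
  have hsL : v - ∑ i, (a i : ℝ) • u i ∈ L :=
    L.sub_mem hvL <| L.sum_mem fun i _ =>
      Nat.cast_smul_eq_nsmul ℝ (a i) (u i) ▸ L.nsmul_mem (hu i) _
  have hv : v = ((m : ℝ) - 1) • y + (y + (v - ∑ i, (a i : ℝ) • u i)) := by
    rw [sub_smul, one_smul, hmy]; abel
  have hK := (convex_convexHull ℝ (expIdeal C L u)).add_smul
    (sub_nonneg.2 (by exact_mod_cast hm : (1 : ℝ) ≤ m)) zero_le_one
  rw [sub_add_cancel, one_smul] at hK
  rw [hK, hv]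
  exact add_mem_add (smul_mem_smul_set hy) (add_mem_convexHull_expIdeal hy hs hsL)

theorem expIdeal_smul {t : ℝ} (ht : 0 ≤ t) (hu : ∀ i, u i ∈ L) :
    expIdeal C L (t • u) = (t • expIdeal C L u + C) ∩ L := by
  ext v
  constructor
  · rintro ⟨hvL, i, hi⟩
    exact ⟨⟨_, smul_mem_smul_set (generator_mem_expIdeal (hu i)), _, hi, add_sub_cancel _ _⟩,
      hvL⟩
  · rintro ⟨⟨_, ⟨x, ⟨-, i, hi⟩, rfl⟩, c, hc, rfl⟩, hvL⟩
    refine ⟨hvL, i, ?_⟩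
    have : t • x + c - (t • u) i = t • (x - u i) + c := by
      rw [Pi.smul_apply, smul_sub]; abel
    rw [this]
    exact C.add_mem (C.smul_mem ht hi) hc

end

theorem toric_exp_lemma
    (p : ℕ)
    (N : ℕ) (w : Fin N → (Fin d → ℝ))
    (σ : Set (Fin d → ℝ))
    -- `σ` is the rational cone generated by the integer vectors `w i`
    (hσ : σ = {x | ∃ c : Fin N → ℝ, (∀ i, 0 ≤ c i) ∧ x = ∑ i, c i • w i})
    (n : ℕ) (u : Fin n → (Fin d → ℝ))
    (hu : ∀ i, u i ∈ σ ∩ latticePts d)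
    -- exponent sets of `I`, of `I^m`, and of `I^{[q]}`
    (ExpI : Set (Fin d → ℝ))
    (hExpI : ExpI = {v | v ∈ latticePts d ∧ ∃ i, v - u i ∈ σ})
    (ExpPow : ℕ → Set (Fin d → ℝ))
    (hExpPow : ∀ m, ExpPow m =
      {v | v ∈ latticePts d ∧
        ∃ a : Fin n → ℕ, (∑ i, a i) = m ∧ v - (∑ i, (a i : ℝ) • u i) ∈ σ})
    (ExpFrob : ℕ → Set (Fin d → ℝ))
    (hExpFrob : ∀ e, ExpFrob e =
      {v | v ∈ latticePts d ∧ ∃ i, v - ((p : ℝ) ^ e) • u i ∈ σ})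
    (HullI : Set (Fin d → ℝ)) (hHull : HullI = convexHull ℝ ExpI) :
    (∀ m : ℕ, 1 ≤ m →
      (((m + n : ℕ) : ℝ) • HullI ∩ latticePts d ⊆ ExpPow m ∧
        ExpPow m ⊆ ((m : ℝ) • HullI) ∩ latticePts d)) ∧
    (∀ e : ℕ, ExpFrob e = (((p : ℝ) ^ e • ExpI) + σ) ∩ latticePts d) := by
  obtain rfl : σ = PointedCone.hull ℝ (range w) := hσ.trans (PointedCone.coe_hull_range w).symm
  obtain rfl : ExpI = expIdeal _ (latticeAddSubgroup d) u := hExpI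
  obtain rfl : ExpPow = expIdealPow _ (latticeAddSubgroup d) u := funext hExpPow
  obtain rfl : ExpFrob = fun e => expIdeal _ (latticeAddSubgroup d) ((p : ℝ) ^ e • u) :=
    funext hExpFrob
  subst hHull
  exact ⟨fun m hm => ⟨smul_convexHull_expIdeal_inter_subset_expIdealPow (fun i => (hu i).1) m,
      expIdealPow_subset_smul_convexHull_expIdeal_inter (fun i => (hu i).2) hm⟩,
    fun e => expIdeal_smul (by positivity) fun i => (hu i).2⟩
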